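/- arXiv:1503.05165 — 2 statements merged into one kernel-verified Lean document; each statement's English description precedes it below -/
import Mathlib

section
/- Let q be a prime with q ≡ 3 (mod 4). Then the number of projective points of the elliptic curve y² = x³ - x over F_q is exactly q + 1. -/
/-!
If `#F ≡ 3 mod 4` then `-1` is not a square in `F`, so `x ↦ -x`, which negates `x³ - x`,
exchanges the squares and non-squares among its nonzero values and `∑ₓ χ(x³ - x) = 0` for the
quadratic character `χ`. Since each `x` contributes `1 + χ(x³ - x)` affine points, there are
exactly `#F` of them, all nonsingular because `Δ = 64 ≠ 0`; the point at infinity adds one.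
-/

open WeierstrassCurve

section QuadraticCharSums

variable {F : Type*} [Field F] [Fintype F] [DecidableEq F]

theorem card_solutions_sq_eq (hF : ringChar F ≠ 2) (f : F → F) :
    (Nat.card {p : F × F // p.2 ^ 2 = f p.1} : ℤ) =
      Fintype.card F + ∑ x, quadraticChar F (f x) := by
  have hfibre (x : F) :
      (Fintype.card {y : F // y ^ 2 = f x} : ℤ) = quadraticChar F (f x) + 1 := by
    rw [← quadraticChar_card_sqrts hF, Set.toFinset_card]
    rfl
  rw [Nat.card_eq_fintype_card,
    Fintype.card_congr (Equiv.subtypeProdEquivSigmaSubtype fun x y => y ^ 2 = f x),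
    Fintype.card_sigma]
  push_cast
  simp only [hfibre, Finset.sum_add_distrib, Finset.sum_const, Finset.card_univ, nsmul_eq_mul,
    mul_one]
  ring

theorem sum_quadraticChar_eq_zero_of_odd (hF : quadraticChar F (-1) = -1) {f : F → F}
    (hf : ∀ x, f (-x) = -f x) : ∑ x, quadraticChar F (f x) = 0 := by
  have hflip (x : F) : quadraticChar F (f (-x)) = -quadraticChar F (f x) := by
    rw [hf, neg_eq_neg_one_mul, map_mul, hF, neg_one_mul]
  have hneg : ∑ x, quadraticChar F (f x) = -∑ x, quadraticChar F (f x) := calc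
    ∑ x, quadraticChar F (f x) = ∑ x, quadraticChar F (f (-x)) :=
      (Fintype.sum_equiv (Equiv.neg F) _ _ fun _ => rfl).symm
    _ = -∑ x, quadraticChar F (f x) := by simp only [hflip, Finset.sum_neg_distrib]
  linarith

theorem quadraticChar_neg_one_of_card_mod_four_eq_three (hF : Fintype.card F % 4 = 3) :
    quadraticChar F (-1) = -1 :=
  quadraticChar_neg_one_iff_not_isSquare.mpr fun h => FiniteField.isSquare_neg_one_iff.mp h hF

end QuadraticCharSums

namespace CurveXCubeSubX

variable {R : Type*} [CommRing R]

theorem equation_iff (x y : R) :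
    Affine.Equation (⟨0, 0, 0, -1, 0⟩ : Affine R) x y ↔ y ^ 2 = x ^ 3 - x := by
  rw [Affine.equation_iff]
  constructor <;> intro h <;> linear_combination h

theorem Δ_eq : (⟨0, 0, 0, -1, 0⟩ : WeierstrassCurve R).Δ = 64 := by
  simp only [Δ, b₂, b₄, b₆, b₈]
  ring

theorem nonsingular_iff {F : Type*} [Field F] (hF : ringChar F ≠ 2) (x y : F) :
    Affine.Nonsingular (⟨0, 0, 0, -1, 0⟩ : Affine F) x y ↔ y ^ 2 = x ^ 3 - x := by
  have hΔ : (⟨0, 0, 0, -1, 0⟩ : WeierstrassCurve F).Δ ≠ 0 := by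
    rw [Δ_eq, show (64 : F) = 2 ^ 6 by norm_num]
    exact pow_ne_zero _ (Ring.two_ne_zero hF)
  rw [← Affine.equation_iff_nonsingular_of_Δ_ne_zero hΔ, equation_iff]

theorem card_point_of_card_mod_four_eq_three {F : Type*} [Field F] [Fintype F]
    (hF : Fintype.card F % 4 = 3) :
    Nat.card (Affine.Point (⟨0, 0, 0, -1, 0⟩ : Affine F)) = Fintype.card F + 1 := by
  classical
  have hchar : ringChar F ≠ 2 := fun h => by
    have := FiniteField.even_card_iff_char_two.mp h
    omega
  have haffine : Nat.card {p : F × F // p.2 ^ 2 = p.1 ^ 3 - p.1} = Fintype.card F := by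
    have hsum : ∑ x : F, quadraticChar F (x ^ 3 - x) = 0 :=
      sum_quadraticChar_eq_zero_of_odd (quadraticChar_neg_one_of_card_mod_four_eq_three hF)
        fun x => by ring
    have := card_solutions_sq_eq hchar fun x => x ^ 3 - x
    rw [hsum, add_zero] at this
    exact_mod_cast this
  calc Nat.card (Affine.Point (⟨0, 0, 0, -1, 0⟩ : Affine F))
      = Nat.card {p : F × F // Affine.Nonsingular (⟨0, 0, 0, -1, 0⟩ : Affine F) p.1 p.2} + 1 :=
        (Nat.card_congr (Affine.nonsingularPointEquiv _)).trans Finite.card_option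
    _ = Nat.card {p : F × F // p.2 ^ 2 = p.1 ^ 3 - p.1} + 1 := by
      rw [Nat.card_congr (Equiv.subtypeEquivRight fun p : F × F =>
        nonsingular_iff hchar p.1 p.2)]
    _ = Fintype.card F + 1 := by rw [haffine]

end CurveXCubeSubX

/-- For a prime `q ≡ 3 mod 4`, the elliptic curve `y² = x³ - x` over `F_q` has exactly
`q + 1` projective points (the nonsingular affine points together with the point at
infinity). -/
theorem curve_y2_eq_x3_sub_x_card (q : ℕ) [Fact q.Prime] (hq : q % 4 = 3) :
    Nat.card (WeierstrassCurve.Affine.Point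
        (⟨0, 0, 0, -1, 0⟩ : WeierstrassCurve.Affine (ZMod q))) = q + 1 := by
  rw [CurveXCubeSubX.card_point_of_card_mod_four_eq_three (by rwa [ZMod.card]), ZMod.card]
end

section
/- Let p be a prime, g ∈ (Z/pZ), and α ∈ F_p a non-square. Suppose γ = [[a,b],[c,d]] ∈ SL_2(Z) reduces modulo p to a matrix of the form [[x, αy],[y, x]] (an element of the non-split Cartan), and suppose that right multiplication by γ maps the lattice L = Z·(1, g) + Z·(0, p) ⊂ Z² into itself (here row vectors act by v ↦ v·γ). Then γ ≡ Id or -Id modulo p. -/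
/-!
Reducing the lattice condition for the vector `(1, g)` modulo `p` shows that `(1, g)` is a row
eigenvector of the reduction `[[x, αy], [y, x]]` of `γ`. An eigenvector of such a matrix forces
`(c - x)² = α y²` for its eigenvalue `c`, so `y = 0` since `α` is not a square. The reduction is
then the scalar `x` with `x² = det γ = 1`, i.e. `x = ±1`.
-/

open Matrix

lemma eq_zero_of_vecMul_nonsplitCartan_eq_smul {K : Type*} [Field K] {α x y c : K}
    (hα : ¬ IsSquare α) {v : Fin 2 → K} (hv : v ≠ 0)
    (h : v ᵥ* !![x, α * y; y, x] = c • v) : y = 0 := by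
  have h0 : v 0 * x + v 1 * y = c * v 0 := by simpa [vecMul, dotProduct] using congrFun h 0
  have h1 : v 0 * (α * y) + v 1 * x = c * v 1 := by
    simpa [vecMul, dotProduct] using congrFun h 1
  have e0 : ((c - x) ^ 2 - α * y ^ 2) * v 0 = 0 := by linear_combination (x - c) * h0 - y * h1
  have e1 : ((c - x) ^ 2 - α * y ^ 2) * v 1 = 0 := by
    linear_combination (x - c) * h1 - α * y * h0
  have hchar : (c - x) ^ 2 = α * y ^ 2 := by
    by_contra hne
    have hne' := sub_ne_zero.mpr hne
    refine hv (funext fun i => ?_)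
    fin_cases i
    exacts [(mul_eq_zero.mp e0).resolve_left hne', (mul_eq_zero.mp e1).resolve_left hne']
  by_contra hy
  exact hα ⟨(c - x) / y, by field_simp; linear_combination -hchar⟩

lemma eq_one_or_eq_neg_one_of_eq_smul_one {R : Type*} [CommRing R] [NoZeroDivisors R]
    {A : Matrix (Fin 2) (Fin 2) R} {x : R} (hA : A = x • 1) (hdet : A.det = 1) :
    A = 1 ∨ A = -1 := by
  rw [hA, det_smul, det_one, Fintype.card_fin, mul_one, sq_eq_one_iff] at hdet
  rcases hdet with rfl | rfl
  · exact .inl (hA.trans (one_smul _ _))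
  · exact .inr (hA.trans (neg_one_smul _ _))

lemma vecMul_map_intCast_eq_smul_of_vecMul_eq (p : ℕ) {g m' n' : ℤ}
    {γ : Matrix (Fin 2) (Fin 2) ℤ}
    (h : ![1, g] ᵥ* γ = m' • ![1, g] + n' • ![0, (p : ℤ)]) :
    ![1, (g : ZMod p)] ᵥ* γ.map (Int.cast : ℤ → ZMod p) = (m' : ZMod p) • ![1, (g : ZMod p)] := by
  ext i
  have hi := congrArg (Int.cast : ℤ → ZMod p) (congrFun h i)
  fin_cases i <;> simpa [vecMul, dotProduct, Fin.sum_univ_two] using hi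

/-- Lattice computation: if `γ ∈ SL₂(ℤ)` reduces mod `p` to an element `[[x, αy],[y, x]]`
of a non-split Cartan subgroup (`α` a non-square), and right multiplication by `γ` maps the
lattice `L = ℤ·(1, g) + ℤ·(0, p)` into itself, then `γ ≡ ±Id mod p`. -/
theorem nonsplit_cartan_lattice (p : ℕ) [Fact p.Prime] (g : ℤ)
    (α : ZMod p) (hα : ¬ IsSquare α)
    (γ : Matrix (Fin 2) (Fin 2) ℤ) (hdet : γ.det = 1)
    (x y : ZMod p) (hred : γ.map (Int.cast : ℤ → ZMod p) = !![x, α * y; y, x])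
    (hL : ∀ m n : ℤ, ∃ m' n' : ℤ,
      Matrix.vecMul (m • ![(1 : ℤ), g] + n • ![(0 : ℤ), (p : ℤ)]) γ =
        m' • ![(1 : ℤ), g] + n' • ![(0 : ℤ), (p : ℤ)]) :
    γ.map (Int.cast : ℤ → ZMod p) = (1 : Matrix (Fin 2) (Fin 2) (ZMod p)) ∨
      γ.map (Int.cast : ℤ → ZMod p) = -1 := by
  obtain ⟨m', n', h⟩ := hL 1 0
  rw [one_smul, zero_smul, add_zero] at h
  have heigen := vecMul_map_intCast_eq_smul_of_vecMul_eq p h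
  rw [hred] at heigen
  have hy : y = 0 :=
    eq_zero_of_vecMul_nonsplitCartan_eq_smul hα (fun h1 => one_ne_zero (congrFun h1 0)) heigen
  have hscalar : γ.map (Int.cast : ℤ → ZMod p) = x • 1 := by
    rw [hred, hy]
    ext i j
    fin_cases i <;> fin_cases j <;> simp
  refine eq_one_or_eq_neg_one_of_eq_smul_one hscalar ?_
  rw [← Int.cast_det, hdet, Int.cast_one]
end
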